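/- Let a ∈ ℂ with |arg a| < π and let τ ∈ ℂ with |τ| < |a|^{1/2}. Then the series Σ_{n=1}^∞ (1/n − τ²/(n+2))·(−τ)^n·a^{−n/2} converges absolutely and its sum equals F(a, τ) := τ²/2 + (a − 1)·Log(1 + τ a^{−1/2}) − τ a^{1/2}, where a^{1/2} and Log denote the principal branches of the square root and the logarithm. -/

import Mathlib

/-!
With `z = -τ a^{-1/2}` (so `‖z‖ < 1`) the `n`-th term is `(1/(n+1) - a z²/(n+3)) z^(n+1)`,
because `a^{-(n+1)/2} = (a^{-1/2})^(n+1)` for the principal power. The series therefore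
splits into `∑ z^(n+1)/(n+1) = -log(1 - z)` minus `a` times its tail
`∑ z^(n+3)/(n+3) = -log(1 - z) - z - z²/2`, and `a z = -τ a^{1/2}`, `a z² = τ²`.
-/

open Complex

/-- `F(a, τ) = τ²/2 + (a − 1)·Log(1 + τ a^{−1/2}) − τ a^{1/2}`, using the principal
branches of the complex logarithm and the complex power. -/
noncomputable def Ffun (a τ : ℂ) : ℂ :=
  τ ^ 2 / 2 + (a - 1) * Complex.log (1 + τ * a ^ (-(1 : ℂ) / 2)) - τ * a ^ ((1 : ℂ) / 2)

namespace Complex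

lemma hasSum_pow_add_three_div {z : ℂ} (hz : ‖z‖ < 1) :
    HasSum (fun n : ℕ ↦ z ^ (n + 3) / ((n : ℂ) + 3)) (-log (1 - z) - z - z ^ 2 / 2) := by
  have h := (hasSum_nat_add_iff' 2).mpr (hasSum_taylorSeries_neg_log' hz)
  rw [show -log (1 - z) - z - z ^ 2 / 2 = -log (1 - z) - ∑ i ∈ Finset.range 2, z ^ (i + 1) / (i + 1)
    by simp [Finset.sum_range_succ]; ring]
  refine h.congr_fun fun n ↦ ?_
  push_cast
  ring_nf

lemma norm_one_div_add_one_sub_div_add_three_le (c : ℂ) (n : ℕ) :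
    ‖1 / ((n : ℂ) + 1) - c / ((n : ℂ) + 3)‖ ≤ 1 + ‖c‖ := by
  refine (norm_sub_le _ _).trans (add_le_add ?_ ?_)
  · rw [norm_div, norm_one, show (n : ℂ) + 1 = ((n + 1 : ℕ) : ℂ) by push_cast; ring,
      norm_natCast, div_le_one (by positivity)]
    exact_mod_cast Nat.le_add_left 1 n
  · rw [norm_div]
    refine div_le_self (norm_nonneg c) ?_
    rw [show (n : ℂ) + 3 = ((n + 3 : ℕ) : ℂ) by push_cast; ring, norm_natCast]
    exact_mod_cast Nat.le_add_left 1 (n + 2)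

lemma summable_norm_one_div_add_one_sub_div_add_three_mul_pow {z : ℂ} (hz : ‖z‖ < 1) (c : ℂ) :
    Summable (fun n : ℕ ↦ ‖(1 / ((n : ℂ) + 1) - c / ((n : ℂ) + 3)) * z ^ (n + 1)‖) := by
  refine Summable.of_nonneg_of_le (fun n ↦ norm_nonneg _) (fun n ↦ ?_)
    ((summable_geometric_of_lt_one (norm_nonneg z) hz).mul_left ((1 + ‖c‖) * ‖z‖))
  calc ‖(1 / ((n : ℂ) + 1) - c / ((n : ℂ) + 3)) * z ^ (n + 1)‖
      ≤ (1 + ‖c‖) * ‖z‖ ^ (n + 1) := by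
        rw [norm_mul, norm_pow]
        gcongr
        exact norm_one_div_add_one_sub_div_add_three_le c n
    _ = (1 + ‖c‖) * ‖z‖ * ‖z‖ ^ n := by ring

lemma hasSum_one_div_add_one_sub_div_add_three_mul_pow {z b c : ℂ} (hz : ‖z‖ < 1)
    (hc : b * z ^ 2 = c) :
    HasSum (fun n : ℕ ↦ (1 / ((n : ℂ) + 1) - c / ((n : ℂ) + 3)) * z ^ (n + 1))
      ((b - 1) * log (1 - z) + b * z + c / 2) := by
  have h := (hasSum_taylorSeries_neg_log' hz).sub ((hasSum_pow_add_three_div hz).mul_left b)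
  rw [show (b - 1) * log (1 - z) + b * z + c / 2
    = -log (1 - z) - b * (-log (1 - z) - z - z ^ 2 / 2) by rw [← hc]; ring]
  refine h.congr_fun fun n ↦ ?_
  have hn : (n : ℂ) + 3 ≠ 0 := by exact_mod_cast (n + 2).succ_ne_zero
  rw [← hc]
  field_simp
  ring

lemma cpow_neg_add_one_div_two (a : ℂ) (n : ℕ) :
    a ^ (-((n : ℂ) + 1) / 2) = (a ^ (-(1 : ℂ) / 2)) ^ (n + 1) := by
  rw [← cpow_nat_mul]
  push_cast
  ring_nf

lemma mul_cpow_neg_half_sq {a : ℂ} (ha : a ≠ 0) : a * (a ^ (-(1 : ℂ) / 2)) ^ 2 = 1 := by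
  rw [← cpow_nat_mul, show ((2 : ℕ) : ℂ) * (-(1 : ℂ) / 2) = -1 by norm_num, cpow_neg_one,
    mul_inv_cancel₀ ha]

lemma mul_cpow_neg_half {a : ℂ} (ha : a ≠ 0) : a * a ^ (-(1 : ℂ) / 2) = a ^ ((1 : ℂ) / 2) := by
  conv_lhs => enter [1]; rw [← cpow_one a]
  rw [← cpow_add _ _ ha]
  norm_num

lemma ne_zero_of_norm_lt_norm_rpow_half {a τ : ℂ} (hτ : ‖τ‖ < ‖a‖ ^ ((1 : ℝ) / 2)) : a ≠ 0 := by
  rintro rfl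
  rw [norm_zero, Real.zero_rpow (by norm_num)] at hτ
  exact (norm_nonneg τ).not_gt hτ

lemma norm_mul_cpow_neg_half_lt_one {a τ : ℂ} (hτ : ‖τ‖ < ‖a‖ ^ ((1 : ℝ) / 2)) :
    ‖τ * a ^ (-(1 : ℂ) / 2)‖ < 1 := by
  have ha : 0 < ‖a‖ := norm_pos_iff.mpr (ne_zero_of_norm_lt_norm_rpow_half hτ)
  rw [norm_mul, show -(1 : ℂ) / 2 = ((-(1 : ℝ) / 2 : ℝ) : ℂ) by push_cast; ring,
    norm_cpow_real]
  calc ‖τ‖ * ‖a‖ ^ (-(1 : ℝ) / 2) < ‖a‖ ^ ((1 : ℝ) / 2) * ‖a‖ ^ (-(1 : ℝ) / 2) := by gcongr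
    _ = 1 := by rw [← Real.rpow_add ha]; norm_num

end Complex

theorem Ffun_series_general (a τ : ℂ)
    (hτ : ‖τ‖ < ‖a‖ ^ ((1 : ℝ) / 2)) :
    Summable (fun n : ℕ =>
      ‖(1 / ((n : ℂ) + 1) - τ ^ 2 / ((n : ℂ) + 3)) * (-τ) ^ (n + 1) *
        a ^ (-((n : ℂ) + 1) / 2)‖) ∧
    ∑' n : ℕ, (1 / ((n : ℂ) + 1) - τ ^ 2 / ((n : ℂ) + 3)) * (-τ) ^ (n + 1) *
        a ^ (-((n : ℂ) + 1) / 2) = Ffun a τ := by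
  have ha : a ≠ 0 := ne_zero_of_norm_lt_norm_rpow_half hτ
  set z := -(τ * a ^ (-(1 : ℂ) / 2)) with hz_def
  have hz : ‖z‖ < 1 := (norm_neg _).trans_lt (norm_mul_cpow_neg_half_lt_one hτ)
  have hc : a * z ^ 2 = τ ^ 2 := by
    rw [neg_sq, mul_pow, mul_left_comm, mul_cpow_neg_half_sq ha, mul_one]
  have hterm (n : ℕ) : (1 / ((n : ℂ) + 1) - τ ^ 2 / ((n : ℂ) + 3)) * (-τ) ^ (n + 1) *
      a ^ (-((n : ℂ) + 1) / 2) = (1 / ((n : ℂ) + 1) - τ ^ 2 / ((n : ℂ) + 3)) * z ^ (n + 1) := by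
    rw [cpow_neg_add_one_div_two, mul_assoc, ← mul_pow, neg_mul]
  simp_rw [hterm]
  refine ⟨summable_norm_one_div_add_one_sub_div_add_three_mul_pow hz _,
    (hasSum_one_div_add_one_sub_div_add_three_mul_pow hz hc).tsum_eq.trans ?_⟩
  rw [Ffun, ← mul_cpow_neg_half ha, hz_def, sub_neg_eq_add]
  ring

/-- For `|arg a| < π` and `|τ| < |a|^{1/2}`, the series
`Σ_{n=1}^∞ (1/n − τ²/(n+2))·(−τ)^n·a^{−n/2}` converges absolutely and its sum is
`F(a, τ)`. -/
theorem Ffun_series (a τ : ℂ) (ha : |Complex.arg a| < Real.pi)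
    (hτ : ‖τ‖ < ‖a‖ ^ ((1 : ℝ) / 2)) :
    Summable (fun n : ℕ =>
      ‖(1 / ((n : ℂ) + 1) - τ ^ 2 / ((n : ℂ) + 3)) * (-τ) ^ (n + 1) *
        a ^ (-((n : ℂ) + 1) / 2)‖) ∧
    ∑' n : ℕ, (1 / ((n : ℂ) + 1) - τ ^ 2 / ((n : ℂ) + 3)) * (-τ) ^ (n + 1) *
        a ^ (-((n : ℂ) + 1) / 2) = Ffun a τ :=
  Ffun_series_general a τ hτ
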